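/- arXiv:1103.1143 — 3 statements merged into one kernel-verified Lean document; each statement's English description precedes it below -/
import Mathlib

section
/- For every κ > 0: φ_R^* ≥ (C_κ(R, X∖R)/μ(R))·(1 − ε_R^* − κ/γ_R); moreover C_κ(R, X∖R) < κ·μ(R) and φ_R^* ≤ (C_κ(R, X∖R)/μ(R))·(1 − C_κ(R, X∖R)/(κ·μ(R)))^{−2}. -/
open Finset

noncomputable section

/-- Irreducibility of a finite nonnegative matrix: any state reaches any other. -/
def Irred {n : Type*} [Fintype n] [DecidableEq n] (P : Matrix n n ℝ) : Prop :=
  ∀ x y, ∃ k : ℕ, 0 < (P ^ k) x y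

/-- The restricted ensemble `μ_R(x) = μ(x)/μ(R)` (as a function on all of `X`). -/
def muR {X : Type*} [Fintype X] (μ : X → ℝ) (R : Finset X) (x : X) : ℝ :=
  μ x / ∑ y ∈ R, μ y

/-- Escape probability `e_R(x) = Σ_{y∉R} p(x,y)`. -/
def escR {X : Type*} [Fintype X] [DecidableEq X] (p : Matrix X X ℝ) (R : Finset X)
    (x : X) : ℝ := ∑ y ∈ Rᶜ, p x y

/-- The reflected kernel `p_R` on `R`. -/
def pRefl {X : Type*} [Fintype X] [DecidableEq X] (p : Matrix X X ℝ) (R : Finset X) :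
    Matrix R R ℝ :=
  fun x y => if (x : X) = (y : X) then p x x + escR p R x else p x y

/-- The sub-Markovian killed kernel `p_R^*` on `R`. -/
def pKill {X : Type*} [Fintype X] (p : Matrix X X ℝ) (R : Finset X) : Matrix R R ℝ :=
  fun x y => p x y

/-- Mean of `f` with respect to the weight `μ` on a finite type. -/
def meanOf {n : Type*} [Fintype n] (μ : n → ℝ) (f : n → ℝ) : ℝ := ∑ x, μ x * f x

/-- Scalar product `⟨f,g⟩` with respect to the weight `μ` on a finite type. -/
def innOf {n : Type*} [Fintype n] (μ : n → ℝ) (f g : n → ℝ) : ℝ := ∑ x, μ x * f x * g x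

/-- Variance of `f` with respect to the weight `μ` on a finite type. -/
def varOf {n : Type*} [Fintype n] (μ : n → ℝ) (f : n → ℝ) : ℝ :=
  ∑ x, μ x * (f x - meanOf μ f) ^ 2

/-- Dirichlet form of the kernel `P` reversible w.r.t. `μ`. -/
def dirOf {n : Type*} [Fintype n] (P : Matrix n n ℝ) (μ : n → ℝ) (f : n → ℝ) : ℝ :=
  (1 / 2) * ∑ x, ∑ y, μ x * P x y * (f x - f y) ^ 2

/-- Spectral gap of the kernel `P` reversible w.r.t. `μ`:
`min { D(f)/Var_μ(f) : Var_μ(f) ≠ 0 }`. -/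
def gapOf {n : Type*} [Fintype n] (P : Matrix n n ℝ) (μ : n → ℝ) : ℝ :=
  sInf {r : ℝ | ∃ f : n → ℝ, varOf μ f ≠ 0 ∧ r = dirOf P μ f / varOf μ f}

/-- Spectral gap `γ_R` of the reflected process on `R`. -/
def gapR {X : Type*} [Fintype X] [DecidableEq X] (p : Matrix X X ℝ) (μ : X → ℝ)
    (R : Finset X) : ℝ :=
  gapOf (pRefl p R) (fun x : R => muR μ R x)

/-- `(κ,∞)`-capacity `C_κ(R, X∖R)` (Dirichlet principle). -/
def capK {X : Type*} [Fintype X] [DecidableEq X] (p : Matrix X X ℝ) (μ : X → ℝ)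
    (R : Finset X) (κ : ℝ) : ℝ :=
  sInf {r : ℝ | ∃ f : X → ℝ, (∀ x ∉ R, f x = 0) ∧
    r = dirOf p μ f + κ * ∑ a ∈ R, μ a * (f a - 1) ^ 2}

/-- `(∞,λ)`-capacity `C^λ(R, X∖R)` (Dirichlet principle). -/
def capL {X : Type*} [Fintype X] [DecidableEq X] (p : Matrix X X ℝ) (μ : X → ℝ)
    (R : Finset X) (l : ℝ) : ℝ :=
  sInf {r : ℝ | ∃ f : X → ℝ, (∀ x ∈ R, f x = 1) ∧
    r = dirOf p μ f + l * ∑ b ∈ Rᶜ, μ b * f b ^ 2}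

/-- `(κ,λ)`-capacity `C_κ^λ(A, B)` (Dirichlet principle). -/
def capKL {X : Type*} [Fintype X] [DecidableEq X] (p : Matrix X X ℝ) (μ : X → ℝ)
    (A B : Finset X) (κ l : ℝ) : ℝ :=
  sInf {r : ℝ | ∃ f : X → ℝ,
    r = dirOf p μ f + κ * ∑ a ∈ A, μ a * (f a - 1) ^ 2 + l * ∑ b ∈ B, μ b * f b ^ 2}

/-!
The density `h = μ_R^* / μ_R` of the quasi-stationary measure is a positive eigenfunction of the
killed kernel with eigenvalue `1 - φ_R^*`, so the ground-state (Doob transform) argument gives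
`D(f) ≥ φ_R^* Σ_R μ f²` for every `f` vanishing off `R`. Minimising `φ_R^* t² + κ (t - 1)²`
pointwise yields `C_κ ≥ μ(R) φ_R^* κ / (φ_R^* + κ)`, which rearranges to the upper bound on
`φ_R^*`. Conversely, `h` extended by zero is a test function for `C_κ` of energy
`μ(R) (φ_R^* ‖h‖²_R + κ Var(h))`, and the Poincaré inequality of the reflected chain applied to
`h` gives `γ_R Var(h) ≤ D_R(h) ≤ φ_R^* ‖h‖²_R`; together these give the lower bound.
-/

section DirichletForm

variable {n : Type*} [Fintype n] {Q : Matrix n n ℝ} {ν : n → ℝ}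

lemma dirOf_nonneg (hQ : ∀ x y, 0 ≤ Q x y) (hν : ∀ x, 0 ≤ ν x) (f : n → ℝ) :
    0 ≤ dirOf Q ν f := by
  unfold dirOf
  exact mul_nonneg (by norm_num) <| Finset.sum_nonneg fun x _ => Finset.sum_nonneg fun y _ =>
    mul_nonneg (mul_nonneg (hν x) (hQ x y)) (sq_nonneg _)

lemma varOf_nonneg (hν : ∀ x, 0 ≤ ν x) (f : n → ℝ) : 0 ≤ varOf ν f :=
  Finset.sum_nonneg fun x _ => mul_nonneg (hν x) (sq_nonneg _)

lemma dirOf_mul_add (a b : ℝ) (f : n → ℝ) :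
    dirOf Q ν (fun x => a * f x + b) = a ^ 2 * dirOf Q ν f := by
  simp only [dirOf, Finset.mul_sum]
  exact Finset.sum_congr rfl fun x _ => Finset.sum_congr rfl fun y _ => by ring

lemma meanOf_mul_add (hν : ∑ x, ν x = 1) (a b : ℝ) (f : n → ℝ) :
    meanOf ν (fun x => a * f x + b) = a * meanOf ν f + b := by
  simp only [meanOf, mul_add, Finset.sum_add_distrib, ← Finset.sum_mul, hν, one_mul,
    Finset.mul_sum]
  exact congrArg (· + b) (Finset.sum_congr rfl fun x _ => by ring)

lemma varOf_mul_add (hν : ∑ x, ν x = 1) (a b : ℝ) (f : n → ℝ) :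
    varOf ν (fun x => a * f x + b) = a ^ 2 * varOf ν f := by
  simp only [varOf, meanOf_mul_add hν, Finset.mul_sum]
  exact Finset.sum_congr rfl fun x _ => by ring

lemma varOf_add_sq_meanOf (hν : ∑ x, ν x = 1) (f : n → ℝ) :
    varOf ν f + meanOf ν f ^ 2 = ∑ x, ν x * f x ^ 2 := by
  have h : ∀ x, ν x * (f x - meanOf ν f) ^ 2
      = ν x * f x ^ 2 - 2 * meanOf ν f * (ν x * f x) + meanOf ν f ^ 2 * ν x := fun x => by ring
  simp only [varOf, h, Finset.sum_add_distrib, Finset.sum_sub_distrib, ← Finset.mul_sum, hν]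
  unfold meanOf
  ring

lemma dirOf_eq_sub (hsym : ∀ x y, ν x * Q x y = ν y * Q y x) (f : n → ℝ) :
    dirOf Q ν f = ∑ x, ν x * (∑ y, Q x y) * f x ^ 2 - ∑ x, ∑ y, ν x * Q x y * f x * f y := by
  have hswap : ∑ x, ∑ y, ν x * Q x y * f y ^ 2 = ∑ x, ∑ y, ν x * Q x y * f x ^ 2 := by
    rw [Finset.sum_comm]
    exact Finset.sum_congr rfl fun x _ => Finset.sum_congr rfl fun y _ => by rw [hsym]
  have hrow : ∀ x, ν x * (∑ y, Q x y) * f x ^ 2 = ∑ y, ν x * Q x y * f x ^ 2 := fun x => by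
    rw [Finset.mul_sum, Finset.sum_mul]
  have h : ∀ x y, ν x * Q x y * (f x - f y) ^ 2 = ν x * Q x y * f x ^ 2
      - 2 * (ν x * Q x y * f x * f y) + ν x * Q x y * f y ^ 2 := fun x y => by ring
  simp only [dirOf, h, hrow, Finset.sum_add_distrib, Finset.sum_sub_distrib, ← Finset.mul_sum,
    hswap]
  ring

end DirichletForm

section Eigenfunction

variable {n : Type*} [Fintype n] {Q : Matrix n n ℝ} {ν h : n → ℝ} {ρ : ℝ}

lemma dirOf_congr_offDiag {P : Matrix n n ℝ} (hPQ : ∀ x y, x ≠ y → P x y = Q x y) :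
    dirOf P ν = dirOf Q ν := by
  funext f
  refine congrArg _ (Finset.sum_congr rfl fun x _ => Finset.sum_congr rfl fun y _ => ?_)
  rcases eq_or_ne x y with rfl | hxy
  · simp
  · rw [hPQ x y hxy]

lemma sum_mul_div_eq_of_reversible (hν : ∀ x, 0 < ν x) (hsym : ∀ x y, ν x * Q x y = ν y * Q y x)
    {m : n → ℝ} (hm : ∀ y, ∑ x, m x * Q x y = ρ * m y) (x : n) :
    ∑ y, Q x y * (m y / ν y) = ρ * (m x / ν x) := by
  have h : ∀ y, Q x y * (m y / ν y) = m y * Q y x / ν x := fun y => by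
    field_simp [(hν x).ne', (hν y).ne']
    linear_combination m y * hsym x y
  rw [Finset.sum_congr rfl fun y _ => h y, ← Finset.sum_div, hm, mul_div_assoc]

lemma sum_sum_mul_eq_of_eigen (heig : ∀ x, ∑ y, Q x y * h y = ρ * h x) :
    ∑ x, ∑ y, ν x * Q x y * h x * h y = ρ * ∑ x, ν x * h x ^ 2 := by
  have h' : ∀ x, ∑ y, ν x * Q x y * h x * h y = ν x * h x * ∑ y, Q x y * h y := fun x => by
    rw [Finset.mul_sum]
    exact Finset.sum_congr rfl fun y _ => by ring
  simp only [h', heig, Finset.mul_sum]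
  exact Finset.sum_congr rfl fun x _ => by ring

lemma sum_sum_mul_le_of_eigen (hQ : ∀ x y, 0 ≤ Q x y) (hν : ∀ x, 0 ≤ ν x)
    (hsym : ∀ x y, ν x * Q x y = ν y * Q y x) (hh : ∀ x, 0 < h x)
    (heig : ∀ x, ∑ y, Q x y * h y = ρ * h x) (f : n → ℝ) :
    ∑ x, ∑ y, ν x * Q x y * f x * f y ≤ ρ * ∑ x, ν x * f x ^ 2 := by
  -- Doob's transform `Q x y * h y / h x` is reversible for `ν h²` with rows summing to `ρ`;
  -- its Dirichlet form at `f / h` is the difference of the two sides.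
  set Qh : Matrix n n ℝ := fun x y => Q x y * h y / h x
  set νh : n → ℝ := fun x => ν x * h x ^ 2
  have hνQh : ∀ x y, νh x * Qh x y = ν x * Q x y * (h x * h y) := fun x y => by
    simp only [νh, Qh]
    field_simp [(hh x).ne']
  have hsymh : ∀ x y, νh x * Qh x y = νh y * Qh y x := fun x y => by
    rw [hνQh, hνQh, hsym, mul_comm (h x)]
  have hrow : ∀ x, ∑ y, Qh x y = ρ := fun x => by
    rw [← Finset.sum_div, heig, mul_div_assoc, div_self (hh x).ne', mul_one]
  have hnonneg := dirOf_nonneg (Q := Qh) (ν := νh)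
    (fun x y => div_nonneg (mul_nonneg (hQ x y) (hh y).le) (hh x).le)
    (fun x => mul_nonneg (hν x) (sq_nonneg _)) (fun x => f x / h x)
  rw [dirOf_eq_sub hsymh] at hnonneg
  have hdiag : ∀ x, νh x * (∑ y, Qh x y) * (f x / h x) ^ 2 = ρ * (ν x * f x ^ 2) := fun x => by
    simp only [hrow, νh]
    field_simp [(hh x).ne']
  have hoff : ∀ x y, νh x * Qh x y * (f x / h x) * (f y / h y) = ν x * Q x y * f x * f y :=
    fun x y => by
      rw [hνQh]
      field_simp [(hh x).ne', (hh y).ne']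
  simp only [hdiag, hoff, ← Finset.mul_sum] at hnonneg
  linarith

lemma dirOf_le_of_eigen (hν : ∀ x, 0 ≤ ν x) (hsym : ∀ x y, ν x * Q x y = ν y * Q y x)
    (hrow : ∀ x, ∑ y, Q x y ≤ 1) (heig : ∀ x, ∑ y, Q x y * h y = ρ * h x) :
    dirOf Q ν h ≤ (1 - ρ) * ∑ x, ν x * h x ^ 2 := by
  have hdiag : ∑ x, ν x * (∑ y, Q x y) * h x ^ 2 ≤ ∑ x, ν x * h x ^ 2 :=
    Finset.sum_le_sum fun x _ => by
      simpa using mul_le_mul_of_nonneg_right (mul_le_mul_of_nonneg_left (hrow x) (hν x))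
        (sq_nonneg (h x))
  rw [dirOf_eq_sub hsym, sum_sum_mul_eq_of_eigen heig]
  linarith

end Eigenfunction

section SpectralGap

variable {n : Type*} [Fintype n] {Q : Matrix n n ℝ} {ν : n → ℝ}

lemma gapOf_le_div (hQ : ∀ x y, 0 ≤ Q x y) (hν : ∀ x, 0 ≤ ν x) {f : n → ℝ}
    (hf : varOf ν f ≠ 0) : gapOf Q ν ≤ dirOf Q ν f / varOf ν f :=
  csInf_le ⟨0, by
    rintro r ⟨g, -, rfl⟩
    exact div_nonneg (dirOf_nonneg hQ hν g) (varOf_nonneg hν g)⟩ ⟨f, hf, rfl⟩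

lemma gapOf_mul_varOf_le_dirOf (hQ : ∀ x y, 0 ≤ Q x y) (hν : ∀ x, 0 ≤ ν x) (f : n → ℝ) :
    gapOf Q ν * varOf ν f ≤ dirOf Q ν f := by
  rcases (varOf_nonneg hν f).eq_or_lt with h | h
  · rw [← h, mul_zero]
    exact dirOf_nonneg hQ hν f
  · exact (le_div_iff₀ h).1 (gapOf_le_div hQ hν h.ne')

lemma eq_meanOf_of_varOf_eq_zero (hν : ∀ x, 0 < ν x) {f : n → ℝ} (h : varOf ν f = 0)
    (x : n) : f x = meanOf ν f := by
  have hterm : ν x * (f x - meanOf ν f) ^ 2 = 0 :=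
    (Finset.sum_eq_zero_iff_of_nonneg fun y _ => mul_nonneg (hν y).le (sq_nonneg _)).1 h x
      (Finset.mem_univ x)
  simpa [(hν x).ne', sub_eq_zero] using hterm

lemma exists_varOf_ne_zero [Nontrivial n] [DecidableEq n] (hν : ∀ x, 0 < ν x) :
    ∃ f : n → ℝ, varOf ν f ≠ 0 := by
  obtain ⟨x₀, x₁, hne⟩ := exists_pair_ne n
  refine ⟨Pi.single x₀ 1, fun h => ?_⟩
  have h₀ := eq_meanOf_of_varOf_eq_zero hν h x₀
  have h₁ := eq_meanOf_of_varOf_eq_zero hν h x₁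
  rw [Pi.single_eq_same] at h₀
  rw [Pi.single_eq_of_ne hne.symm] at h₁
  exact one_ne_zero (h₀.trans h₁.symm)

lemma eq_of_dirOf_eq_zero (hQ : ∀ x y, 0 ≤ Q x y) (hν : ∀ x, 0 < ν x) {g : n → ℝ}
    (h : dirOf Q ν g = 0) {x y : n} (hxy : Q x y ≠ 0) : g x = g y := by
  have hterm : ν x * Q x y * (g x - g y) ^ 2 ≤ 0 := by
    have hnonneg : ∀ a b, 0 ≤ ν a * Q a b * (g a - g b) ^ 2 := fun a b =>
      mul_nonneg (mul_nonneg (hν a).le (hQ a b)) (sq_nonneg _)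
    calc ν x * Q x y * (g x - g y) ^ 2
        ≤ ∑ b, ν x * Q x b * (g x - g b) ^ 2 :=
          Finset.single_le_sum (fun b _ => hnonneg x b) (Finset.mem_univ y)
      _ ≤ ∑ a, ∑ b, ν a * Q a b * (g a - g b) ^ 2 :=
          Finset.single_le_sum (f := fun a => ∑ b, ν a * Q a b * (g a - g b) ^ 2)
            (fun a _ => Finset.sum_nonneg fun b _ => hnonneg a b) (Finset.mem_univ x)
      _ = 2 * dirOf Q ν g := by unfold dirOf; ring
      _ = 0 := by rw [h, mul_zero]
  have hpos : 0 < ν x * Q x y := mul_pos (hν x) ((hQ x y).lt_of_ne' hxy)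
  have hsq : (g x - g y) ^ 2 = 0 := by nlinarith [sq_nonneg (g x - g y)]
  simpa [sub_eq_zero] using hsq

lemma eq_of_irred [DecidableEq n] (hirr : Irred Q) {g : n → ℝ}
    (hstep : ∀ x y, Q x y ≠ 0 → g x = g y) (x y : n) : g x = g y := by
  suffices h : ∀ k x y, (Q ^ k) x y ≠ 0 → g x = g y from
    (hirr x y).elim fun k hk => h k x y hk.ne'
  intro k
  induction k with
  | zero =>
    intro x y hxy
    rw [pow_zero] at hxy
    obtain rfl : x = y := by_contra fun hne => hxy (Matrix.one_apply_ne hne)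
    rfl
  | succ k ih =>
    intro x y hxy
    rw [pow_succ', Matrix.mul_apply] at hxy
    obtain ⟨z, -, hz⟩ := Finset.exists_ne_zero_of_sum_ne_zero hxy
    exact (hstep x z (left_ne_zero_of_mul hz)).trans (ih z y (right_ne_zero_of_mul hz))

lemma isCompact_meanOf_eq_zero_varOf_eq_one (hν : ∀ x, 0 < ν x) :
    IsCompact {g : n → ℝ | meanOf ν g = 0 ∧ varOf ν g = 1} := by
  have hclosed : IsClosed {g : n → ℝ | meanOf ν g = 0 ∧ varOf ν g = 1} :=
    (isClosed_eq (by unfold meanOf; fun_prop) continuous_const).inter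
      (isClosed_eq (by unfold varOf meanOf; fun_prop) continuous_const)
  refine Metric.isCompact_of_isClosed_isBounded hclosed
    ((Bornology.IsBounded.pi fun i => Metric.isBounded_Icc (-(1 + 1 / ν i)) (1 + 1 / ν i)).subset
      fun g ⟨hmean, hvar⟩ i _ => ?_)
  have hsq : ν i * g i ^ 2 ≤ 1 := by
    rw [← hvar]
    simpa [varOf, hmean] using
      Finset.single_le_sum (f := fun x => ν x * g x ^ 2)
        (fun x _ => mul_nonneg (hν x).le (sq_nonneg _)) (Finset.mem_univ i)
  have hsq' : g i ^ 2 ≤ 1 / ν i := by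
    rw [le_div_iff₀ (hν i)]
    linarith
  constructor <;> nlinarith [sq_nonneg (g i - 1), sq_nonneg (g i + 1)]

lemma exists_normalized_dirOf_eq_div (hν : ∀ x, 0 < ν x) (hν1 : ∑ x, ν x = 1) {f : n → ℝ}
    (hf : varOf ν f ≠ 0) :
    ∃ g, (meanOf ν g = 0 ∧ varOf ν g = 1) ∧ dirOf Q ν g = dirOf Q ν f / varOf ν f := by
  have hvar : 0 < varOf ν f := (varOf_nonneg (fun x => (hν x).le) f).lt_of_ne' hf
  set s := (Real.sqrt (varOf ν f))⁻¹
  have hs : s ^ 2 = (varOf ν f)⁻¹ := by rw [inv_pow, Real.sq_sqrt hvar.le]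
  refine ⟨fun x => s * f x + -(s * meanOf ν f), ⟨?_, ?_⟩, ?_⟩
  · rw [meanOf_mul_add hν1]
    ring
  · rw [varOf_mul_add hν1, hs, inv_mul_cancel₀ hf]
  · rw [dirOf_mul_add, hs, inv_mul_eq_div]

lemma dirOf_pos [DecidableEq n] (hQ : ∀ x y, 0 ≤ Q x y) (hν : ∀ x, 0 < ν x)
    (hν1 : ∑ x, ν x = 1) (hirr : Irred Q) {g : n → ℝ} (hg : varOf ν g ≠ 0) :
    0 < dirOf Q ν g := by
  refine (dirOf_nonneg hQ (fun x => (hν x).le) g).lt_of_ne' fun h0 => hg ?_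
  obtain ⟨x₀⟩ : Nonempty n := not_isEmpty_iff.1 fun _ => hg (by simp [varOf])
  have hconst : g = fun x => 0 * g x + g x₀ := funext fun x => by
    rw [zero_mul, zero_add, eq_of_irred hirr (fun _ _ => eq_of_dirOf_eq_zero hQ hν h0) x x₀]
  rw [hconst, varOf_mul_add hν1, zero_pow two_ne_zero, zero_mul]

lemma gapOf_pos [DecidableEq n] [Nontrivial n] (hQ : ∀ x y, 0 ≤ Q x y) (hν : ∀ x, 0 < ν x)
    (hν1 : ∑ x, ν x = 1) (hirr : Irred Q) : 0 < gapOf Q ν := by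
  obtain ⟨f₀, hf₀⟩ := exists_varOf_ne_zero hν
  obtain ⟨g₀, hg₀, hmin⟩ := (isCompact_meanOf_eq_zero_varOf_eq_one hν).exists_isMinOn
    ((exists_normalized_dirOf_eq_div (Q := Q) hν hν1 hf₀).imp fun _ h => h.1)
    (by unfold dirOf; fun_prop : Continuous (dirOf Q ν)).continuousOn
  refine (dirOf_pos hQ hν hν1 hirr (hg₀.2.trans_ne one_ne_zero)).trans_le
    (le_csInf ⟨_, f₀, hf₀, rfl⟩ ?_)
  rintro r ⟨f, hf, rfl⟩
  obtain ⟨g, hg, hgf⟩ := exists_normalized_dirOf_eq_div hν hν1 hf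
  exact hgf ▸ hmin hg

end SpectralGap

section Restricted

variable {X : Type*} [Fintype X] {p : Matrix X X ℝ} {μ : X → ℝ} {R : Finset X} {κ φ : ℝ}

lemma muR_pos (hμ : ∀ x, 0 < μ x) (hR : R.Nonempty) (x : X) : 0 < muR μ R x :=
  div_pos (hμ x) (Finset.sum_pos (fun y _ => hμ y) hR)

lemma sum_muR (hμ : ∀ x, 0 < μ x) (hR : R.Nonempty) : ∑ x : R, muR μ R x = 1 := by
  unfold muR
  rw [← Finset.sum_div, Finset.sum_coe_sort R μ,
    div_self (Finset.sum_pos (fun y _ => hμ y) hR).ne']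

lemma sum_mul_muR (hμ : ∀ x, 0 < μ x) (hR : R.Nonempty) (g : R → ℝ) :
    (∑ y ∈ R, μ y) * ∑ x : R, muR μ R x * g x = ∑ x : R, μ x * g x := by
  have hM := (Finset.sum_pos (fun y _ => hμ y) hR).ne'
  rw [Finset.mul_sum]
  exact Finset.sum_congr rfl fun x _ => by unfold muR; field_simp

lemma muR_mul_pKill (hrev : ∀ x y, μ x * p x y = μ y * p y x) (x y : R) :
    muR μ R x * pKill p R x y = muR μ R y * pKill p R y x := by
  simp only [muR, pKill, div_mul_eq_mul_div, hrev]

lemma sum_pKill_le_one (hp : ∀ x y, 0 ≤ p x y) (hp_row : ∀ x, ∑ y, p x y = 1) (x : R) :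
    ∑ y, pKill p R x y ≤ 1 :=
  (Finset.sum_coe_sort R (p x)).trans_le <| (hp_row x).symm ▸
    Finset.sum_le_sum_of_subset_of_nonneg (Finset.subset_univ R) fun y _ _ => hp x y

lemma pRefl_nonneg [DecidableEq X] (hp : ∀ x y, 0 ≤ p x y) (x y : R) : 0 ≤ pRefl p R x y := by
  unfold pRefl escR
  split
  · exact add_nonneg (hp x x) (Finset.sum_nonneg fun z _ => hp x z)
  · exact hp x y

lemma dirOf_pRefl [DecidableEq X] (ν : R → ℝ) : dirOf (pRefl p R) ν = dirOf (pKill p R) ν :=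
  dirOf_congr_offDiag fun _ _ hxy => if_neg (Subtype.coe_injective.ne hxy)

lemma dirOf_eq_of_eq_zero_off (hp_row : ∀ x, ∑ y, p x y = 1)
    (hrev : ∀ x y, μ x * p x y = μ y * p y x) {F : X → ℝ} (hF : ∀ x ∉ R, F x = 0) :
    dirOf p μ F = ∑ x : R, μ x * F x ^ 2 - ∑ x : R, ∑ y : R, μ x * pKill p R x y * F x * F y := by
  have hrestrict : ∀ g : X → ℝ, (∀ x ∉ R, g x = 0) → ∑ x, g x = ∑ x : R, g x := fun g hg => by
    rw [Finset.sum_coe_sort R g]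
    exact (Finset.sum_subset (Finset.subset_univ R) fun x _ hx => hg x hx).symm
  rw [dirOf_eq_sub hrev]
  simp only [hp_row, mul_one]
  rw [hrestrict _ fun x hx => by simp [hF x hx],
    hrestrict _ fun x hx => Finset.sum_eq_zero fun y _ => by simp [hF x hx]]
  congr 1
  refine Finset.sum_congr rfl fun x _ => hrestrict _ fun y hy => by simp [hF y hy]

lemma capK_energy_nonneg (hp : ∀ x y, 0 ≤ p x y) (hμ : ∀ x, 0 ≤ μ x) (hκ : 0 ≤ κ)
    (f : X → ℝ) : 0 ≤ dirOf p μ f + κ * ∑ a ∈ R, μ a * (f a - 1) ^ 2 :=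
  add_nonneg (dirOf_nonneg hp hμ f)
    (mul_nonneg hκ (Finset.sum_nonneg fun a _ => mul_nonneg (hμ a) (sq_nonneg _)))

lemma mul_sum_sq_le_dirOf (hp : ∀ x y, 0 ≤ p x y) (hp_row : ∀ x, ∑ y, p x y = 1)
    (hμ : ∀ x, 0 ≤ μ x) (hrev : ∀ x y, μ x * p x y = μ y * p y x) {h : R → ℝ}
    (hh : ∀ x, 0 < h x) (heig : ∀ x, ∑ y, pKill p R x y * h y = (1 - φ) * h x)
    {F : X → ℝ} (hF : ∀ x ∉ R, F x = 0) :
    φ * ∑ a ∈ R, μ a * F a ^ 2 ≤ dirOf p μ F := by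
  have hground := sum_sum_mul_le_of_eigen (Q := pKill p R) (ν := fun x : R => μ x)
    (fun x y => hp x y) (fun x => hμ x) (fun x y => hrev x y) hh heig (fun x => F x)
  rw [dirOf_eq_of_eq_zero_off hp_row hrev hF, ← Finset.sum_coe_sort R]
  linarith

end Restricted

lemma mul_div_add_le_mul_sq_add_mul_sq {a b : ℝ} (hab : 0 < a + b) (t : ℝ) :
    a * b / (a + b) ≤ a * t ^ 2 + b * (t - 1) ^ 2 := by
  rw [div_le_iff₀ hab]
  nlinarith [sq_nonneg ((a + b) * t - b)]

section Capacity

variable {X : Type*} [Fintype X] [DecidableEq X] {p : Matrix X X ℝ} {μ : X → ℝ} {R : Finset X}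
  {κ φ : ℝ}

lemma capK_le (hp : ∀ x y, 0 ≤ p x y) (hμ : ∀ x, 0 ≤ μ x) (hκ : 0 ≤ κ) {f : X → ℝ}
    (hf : ∀ x ∉ R, f x = 0) : capK p μ R κ ≤ dirOf p μ f + κ * ∑ a ∈ R, μ a * (f a - 1) ^ 2 :=
  csInf_le ⟨0, fun _ ⟨g, _, hr⟩ => hr ▸ capK_energy_nonneg hp hμ hκ g⟩ ⟨f, hf, rfl⟩

lemma le_capK {c : ℝ} (h : ∀ f : X → ℝ, (∀ x ∉ R, f x = 0) →
      c ≤ dirOf p μ f + κ * ∑ a ∈ R, μ a * (f a - 1) ^ 2) :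
    c ≤ capK p μ R κ :=
  le_csInf ⟨_, 0, fun _ _ => rfl, rfl⟩ fun _ ⟨f, hf, hr⟩ => hr ▸ h f hf

lemma capK_nonneg (hp : ∀ x y, 0 ≤ p x y) (hμ : ∀ x, 0 ≤ μ x) (hκ : 0 ≤ κ) :
    0 ≤ capK p μ R κ :=
  le_capK fun f _ => capK_energy_nonneg hp hμ hκ f

lemma capK_lt_mul_sum (hp : ∀ x y, 0 ≤ p x y) (hμ : ∀ x, 0 < μ x) (hR : R.Nonempty)
    (hκ : 0 < κ) : capK p μ R κ < κ * ∑ y ∈ R, μ y := by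
  set M := ∑ y ∈ R, μ y
  have hM : 0 < M := Finset.sum_pos (fun y _ => hμ y) hR
  set g : X → ℝ := fun x => if x ∈ R then 1 else 0
  set d := dirOf p μ g
  have hd : 0 ≤ d := dirOf_nonneg hp (fun x => (hμ x).le) g
  -- the optimal multiple of the indicator of `R`
  set t := κ * M / (d + κ * M)
  have ht : 0 < t := by positivity
  have htd : t * (d + κ * M) = κ * M := div_mul_cancel₀ _ (by positivity)
  have hdir : dirOf p μ (fun x => t * g x + 0) = t ^ 2 * d := dirOf_mul_add t 0 g
  have henergy : ∑ a ∈ R, μ a * ((t * g a + 0) - 1) ^ 2 = (t - 1) ^ 2 * M := by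
    rw [Finset.mul_sum]
    exact Finset.sum_congr rfl fun a ha => by simp only [g, if_pos ha]; ring
  have hle := capK_le (R := R) (κ := κ) hp (fun x => (hμ x).le) hκ.le
    (f := fun x => t * g x + 0) fun x hx => by simp [g, hx]
  have hval : t ^ 2 * d + κ * ((t - 1) ^ 2 * M) = κ * M - t * (κ * M) := by
    linear_combination t * htd
  rw [hdir, henergy, hval] at hle
  linarith [mul_pos ht (mul_pos hκ hM)]

lemma le_capK_of_eigen (hp : ∀ x y, 0 ≤ p x y) (hp_row : ∀ x, ∑ y, p x y = 1)
    (hμ : ∀ x, 0 ≤ μ x) (hrev : ∀ x y, μ x * p x y = μ y * p y x) {h : R → ℝ}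
    (hh : ∀ x, 0 < h x) (heig : ∀ x, ∑ y, pKill p R x y * h y = (1 - φ) * h x)
    (hφκ : 0 < φ + κ) :
    φ * κ / (φ + κ) * ∑ y ∈ R, μ y ≤ capK p μ R κ := by
  refine le_capK fun f hf => ?_
  have hdir := mul_sum_sq_le_dirOf hp hp_row hμ hrev hh heig hf
  calc φ * κ / (φ + κ) * ∑ y ∈ R, μ y
      ≤ ∑ a ∈ R, μ a * (φ * f a ^ 2 + κ * (f a - 1) ^ 2) := by
        rw [mul_comm, Finset.sum_mul]
        exact Finset.sum_le_sum fun a _ =>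
          mul_le_mul_of_nonneg_left (mul_div_add_le_mul_sq_add_mul_sq hφκ (f a)) (hμ a)
    _ = φ * ∑ a ∈ R, μ a * f a ^ 2 + κ * ∑ a ∈ R, μ a * (f a - 1) ^ 2 := by
        simp only [Finset.mul_sum, ← Finset.sum_add_distrib]
        exact Finset.sum_congr rfl fun a _ => by ring
    _ ≤ dirOf p μ f + κ * ∑ a ∈ R, μ a * (f a - 1) ^ 2 := by linarith

lemma capK_le_of_eigen (hp : ∀ x y, 0 ≤ p x y) (hp_row : ∀ x, ∑ y, p x y = 1)
    (hμ : ∀ x, 0 < μ x) (hR : R.Nonempty) (hrev : ∀ x y, μ x * p x y = μ y * p y x)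
    (hκ : 0 ≤ κ) {h : R → ℝ} (heig : ∀ x, ∑ y, pKill p R x y * h y = (1 - φ) * h x)
    (hmean : meanOf (fun x : R => muR μ R x) h = 1) :
    capK p μ R κ ≤
      (φ * (varOf (fun x : R => muR μ R x) h + 1) + κ * varOf (fun x : R => muR μ R x) h) *
        ∑ y ∈ R, μ y := by
  set H : X → ℝ := fun x => if hx : x ∈ R then h ⟨x, hx⟩ else 0
  have hH : ∀ x : R, H x = h x := fun x => dif_pos x.2
  have hHR : ∀ x ∉ R, H x = 0 := fun x hx => dif_neg hx
  have hsq : ∑ x : R, μ x * h x ^ 2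
      = (∑ y ∈ R, μ y) * (varOf (fun x : R => muR μ R x) h + 1) := by
    rw [← sum_mul_muR hμ hR, ← varOf_add_sq_meanOf (sum_muR hμ hR), hmean, one_pow]
  have hdir : dirOf p μ H = φ * ∑ x : R, μ x * h x ^ 2 := by
    rw [dirOf_eq_of_eq_zero_off hp_row hrev hHR]
    simp only [hH]
    rw [sum_sum_mul_eq_of_eigen heig]
    ring
  have hvar : ∑ a ∈ R, μ a * (H a - 1) ^ 2
      = (∑ y ∈ R, μ y) * varOf (fun x : R => muR μ R x) h := by
    rw [← Finset.sum_coe_sort R, varOf, hmean, sum_mul_muR hμ hR (fun x => (h x - 1) ^ 2)]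
    simp only [hH]
  calc capK p μ R κ ≤ dirOf p μ H + κ * ∑ a ∈ R, μ a * (H a - 1) ^ 2 :=
        capK_le hp (fun x => (hμ x).le) hκ hHR
    _ = _ := by rw [hdir, hsq, hvar]; ring

lemma gapR_mul_varOf_le (hp : ∀ x y, 0 ≤ p x y) (hp_row : ∀ x, ∑ y, p x y = 1)
    (hμ : ∀ x, 0 < μ x) (hR : R.Nonempty) (hrev : ∀ x y, μ x * p x y = μ y * p y x)
    {h : R → ℝ} (heig : ∀ x, ∑ y, pKill p R x y * h y = (1 - φ) * h x)
    (hmean : meanOf (fun x : R => muR μ R x) h = 1) :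
    gapR p μ R * varOf (fun x : R => muR μ R x) h
      ≤ φ * (varOf (fun x : R => muR μ R x) h + 1) :=
  calc gapR p μ R * varOf (fun x : R => muR μ R x) h
      ≤ dirOf (pRefl p R) (fun x : R => muR μ R x) h :=
        gapOf_mul_varOf_le_dirOf (pRefl_nonneg hp) (fun x => (muR_pos hμ hR x).le) h
    _ = dirOf (pKill p R) (fun x : R => muR μ R x) h := by rw [dirOf_pRefl]
    _ ≤ (1 - (1 - φ)) * ∑ x : R, muR μ R x * h x ^ 2 :=
        dirOf_le_of_eigen (fun x => (muR_pos hμ hR x).le) (muR_mul_pKill hrev)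
          (sum_pKill_le_one hp hp_row) heig
    _ = φ * (varOf (fun x : R => muR μ R x) h + 1) := by
        rw [← varOf_add_sq_meanOf (sum_muR hμ hR), hmean]
        ring

lemma gapR_pos (hp : ∀ x y, 0 ≤ p x y) (hμ : ∀ x, 0 < μ x) (hR : 2 ≤ R.card)
    (hirr : Irred (pRefl p R)) : 0 < gapR p μ R :=
  have : Nontrivial R := Fintype.one_lt_card_iff_nontrivial.1 (by rw [Fintype.card_coe]; omega)
  have hR' : R.Nonempty := Finset.card_pos.1 (by omega)
  gapOf_pos (pRefl_nonneg hp) (fun x => muR_pos hμ hR' x) (sum_muR hμ hR') hirr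

end Capacity

lemma mul_one_sub_div_sub_div_le {c φ κ γ V : ℝ} (hc : 0 ≤ c) (hφ : 0 ≤ φ) (hκ : 0 ≤ κ)
    (hγ : 0 < γ) (hV : 0 ≤ V) (hcV : c ≤ φ * (V + 1) + κ * V) (hγV : γ * V ≤ φ * (V + 1)) :
    c * (1 - φ / γ - κ / γ) ≤ φ := by
  rcases le_or_gt (1 - φ / γ - κ / γ) 0 with hneg | hpos
  · nlinarith
  have hfactor : 1 - φ / γ - κ / γ = (γ - φ - κ) / γ := by field_simp
  rw [hfactor] at hpos ⊢
  have hγφκ : 0 < γ - φ - κ := (div_pos_iff_of_pos_right hγ).1 hpos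
  rw [mul_div_assoc', div_le_iff₀ hγ]
  have hγVA : γ * V ≤ φ * (V + 1) + κ * V := by nlinarith
  nlinarith [mul_le_mul_of_nonneg_right hcV hγφκ.le,
    mul_le_mul_of_nonneg_left hγVA (add_nonneg hφ hκ)]

lemma le_mul_inv_one_sub_div_sq {c φ κ : ℝ} (hφ : 0 ≤ φ) (hc : 0 ≤ c) (hcκ : c < κ)
    (hlow : φ * κ / (φ + κ) ≤ c) : φ ≤ c * ((1 - c / κ)⁻¹) ^ 2 := by
  have hκ : 0 < κ := hc.trans_lt hcκ
  have hκc : 0 < κ - c := sub_pos.2 hcκ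
  rw [div_le_iff₀ (by positivity)] at hlow
  rw [one_sub_div hκ.ne', inv_div, div_pow, mul_div_assoc', le_div_iff₀ (by positivity)]
  nlinarith [mul_le_mul_of_nonneg_right (show φ * (κ - c) ≤ c * κ by linarith) hκc.le,
    mul_nonneg hc hκ.le]

theorem mean_exit_time_estimates_general
    (X : Type*) [Fintype X] [DecidableEq X]
    (p : Matrix X X ℝ) (μ : X → ℝ) (R : Finset X)
    (hp_nonneg : ∀ x y, 0 ≤ p x y)
    (hp_row : ∀ x, ∑ y, p x y = 1)
    (hμ_pos : ∀ x, 0 < μ x)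
    (hrev : ∀ x y, μ x * p x y = μ y * p y x)
    (hR_two : 2 ≤ R.card)
    (hpR_irr : Irred (pRefl p R))
    (φstar : ℝ) (hφ_pos : 0 < φstar)
    (μstar : R → ℝ) (hμstar_pos : ∀ x, 0 < μstar x)
    (hμstar_sum : ∑ x : R, μstar x = 1)
    (hqs : ∀ y : R, ∑ x : R, μstar x * pKill p R x y = (1 - φstar) * μstar y)
    (κ : ℝ) (hκ : 0 < κ) :
    (capK p μ R κ / ∑ y ∈ R, μ y) * (1 - φstar / gapR p μ R - κ / gapR p μ R) ≤ φstar ∧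
    capK p μ R κ < κ * ∑ y ∈ R, μ y ∧
    φstar ≤ (capK p μ R κ / ∑ y ∈ R, μ y) *
        ((1 - capK p μ R κ / (κ * ∑ y ∈ R, μ y))⁻¹) ^ 2 := by
  have hR : R.Nonempty := Finset.card_pos.1 (by omega)
  have hM : 0 < ∑ y ∈ R, μ y := Finset.sum_pos (fun y _ => hμ_pos y) hR
  have hν : ∀ x : R, 0 < muR μ R x := fun x => muR_pos hμ_pos hR x
  -- `h` is the density `h_R^*` of the quasi-stationary measure with respect to `μ_R`
  set h : R → ℝ := fun x => μstar x / muR μ R x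
  have heig : ∀ x, ∑ y, pKill p R x y * h y = (1 - φstar) * h x :=
    sum_mul_div_eq_of_reversible hν (muR_mul_pKill hrev) hqs
  have hmean : meanOf (fun x : R => muR μ R x) h = 1 := by
    simp only [meanOf, h, mul_div_cancel₀ _ (hν _).ne', hμstar_sum]
  have hcap : 0 ≤ capK p μ R κ / ∑ y ∈ R, μ y :=
    div_nonneg (capK_nonneg hp_nonneg (hμ_pos · |>.le) hκ.le) hM.le
  have hlt := capK_lt_mul_sum hp_nonneg hμ_pos hR hκ
  have hupper := (div_le_iff₀ hM).2
    (capK_le_of_eigen hp_nonneg hp_row hμ_pos hR hrev hκ.le heig hmean)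
  have hlower := (le_div_iff₀ hM).2 (le_capK_of_eigen hp_nonneg hp_row (hμ_pos · |>.le) hrev
    (fun x => div_pos (hμstar_pos x) (hν x)) heig (add_pos hφ_pos hκ))
  refine ⟨mul_one_sub_div_sub_div_le hcap hφ_pos.le hκ.le
    (gapR_pos hp_nonneg hμ_pos hR_two hpR_irr) (varOf_nonneg (hν · |>.le) h) hupper
    (gapR_mul_varOf_le hp_nonneg hp_row hμ_pos hR hrev heig hmean), hlt, ?_⟩
  rw [mul_comm κ, ← div_div]
  exact le_mul_inv_one_sub_div_sq hφ_pos.le hcap ((div_lt_iff₀ hM).2 hlt) hlower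

/-- Theorem 2.9 (mean exit time estimates): two-sided bounds on `φ_R^*` in terms of the
`(κ,∞)`-capacity `C_κ(R, X∖R)`. -/
theorem mean_exit_time_estimates
    (X : Type*) [Fintype X] [DecidableEq X]
    (p : Matrix X X ℝ) (μ : X → ℝ) (R : Finset X)
    (hp_nonneg : ∀ x y, 0 ≤ p x y)
    (hp_row : ∀ x, ∑ y, p x y = 1)
    (hp_irr : Irred p)
    (hμ_pos : ∀ x, 0 < μ x)
    (hμ_sum : ∑ x, μ x = 1)
    (hrev : ∀ x y, μ x * p x y = μ y * p y x)
    (hR_ne : R.Nonempty) (hR_proper : R ≠ Finset.univ)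
    (hR_two : 2 ≤ R.card)
    (hpR_irr : Irred (pRefl p R))
    (φstar : ℝ) (hφ_pos : 0 < φstar) (hφ_le : φstar ≤ 1)
    (μstar : R → ℝ) (hμstar_pos : ∀ x, 0 < μstar x)
    (hμstar_sum : ∑ x : R, μstar x = 1)
    (hqs : ∀ y : R, ∑ x : R, μstar x * pKill p R x y = (1 - φstar) * μstar y)
    (κ : ℝ) (hκ : 0 < κ) :
    (capK p μ R κ / ∑ y ∈ R, μ y) * (1 - φstar / gapR p μ R - κ / gapR p μ R) ≤ φstar ∧
    capK p μ R κ < κ * ∑ y ∈ R, μ y ∧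
    φstar ≤ (capK p μ R κ / ∑ y ∈ R, μ y) *
        ((1 - capK p μ R κ / (κ * ∑ y ∈ R, μ y))⁻¹) ^ 2 :=
  mean_exit_time_estimates_general X p μ R hp_nonneg hp_row hμ_pos hrev hR_two hpR_irr φstar hφ_pos
    μstar hμstar_pos hμstar_sum hqs κ hκ
end
end

section
/- φ_R^* = min{ D(f)/(Σ_{x∈X} μ(x)f(x)²) : f : X → ℝ, f not identically zero, f ≡ 0 on X∖R }; moreover the series S = Σ_{k=0}^∞ Σ_{x,y∈R} μ_R(x)·((p_R^*)^k)(x,y) converges (it equals the mean exit time E_{μ_R}[τ_{X∖R}] of the continuous-time chain started from μ_R) and φ_R^* ≤ 1/S ≤ φ_R. -/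
open Finset

noncomputable section

/-!
Put `λ = 1 - φ*` and `A = p_R^*`. Reversibility turns the left eigenvector `μ*` of `A` into the
positive right eigenvector `h = μ*/μ`, and termwise AM-GM against `h` gives the Rayleigh bound
`⟨f, A f⟩_μ ≤ λ ⟨f, f⟩_μ` on `R`. As `D(f) = ⟨f, (1 - A) f⟩_μ` for `f` vanishing off `R`, this is
the variational formula, with equality at `h`.

The left eigenvector also gives `Aᵏ(x,y) ≤ λᵏ μ*(y)/μ*(x)`, so the series converges, to
`S = ⟨1, v⟩_μ / μ(R)` where `v = ∑ₖ Aᵏ 1` solves `(1 - A) v = 1`. For the form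
`E(f,g) = ⟨f, (1 - A) g⟩_μ` this means `E(v,v) = ⟨1,v⟩_μ` and `E(1,v) = μ(R)`, while
`E(1,1) = μ(R) φ_R`. The gap inequality `φ* ⟨v,v⟩_μ ≤ E(v,v)` together with Cauchy–Schwarz in
`L²(μ)` gives `φ* S ≤ 1`, and Cauchy–Schwarz for the nonnegative form `E` gives `1 ≤ φ_R S`.
-/

open Matrix

section Reversible

variable {ι : Type*} [Fintype ι] {A : Matrix ι ι ℝ} {w : ι → ℝ}

lemma innOf_comm (f g : ι → ℝ) : innOf w f g = innOf w g f := by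
  simp only [innOf, mul_right_comm]

lemma innOf_sub_right (f g g' : ι → ℝ) : innOf w f (g - g') = innOf w f g - innOf w f g' := by
  simp only [innOf, Pi.sub_apply, mul_sub, sum_sub_distrib]

lemma innOf_self_nonneg (hw : ∀ x, 0 ≤ w x) (f : ι → ℝ) : 0 ≤ innOf w f f :=
  sum_nonneg fun x _ => by rw [mul_assoc]; exact mul_nonneg (hw x) (mul_self_nonneg _)

lemma innOf_sq_le (hw : ∀ x, 0 ≤ w x) (f g : ι → ℝ) :
    innOf w f g ^ 2 ≤ innOf w f f * innOf w g g := by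
  have hterm : ∀ (u : ι → ℝ) x, 0 ≤ w x * u x * u x := fun u x => by
    rw [mul_assoc]; exact mul_nonneg (hw x) (mul_self_nonneg _)
  exact sum_sq_le_sum_mul_sum_of_sq_le_mul _ (fun x _ => hterm f x) (fun x _ => hterm g x)
    fun x _ => le_of_eq (by ring)

lemma innOf_mulVec_comm (hrev : ∀ x y, w x * A x y = w y * A y x) (f g : ι → ℝ) :
    innOf w f (A *ᵥ g) = innOf w g (A *ᵥ f) := by
  simp only [innOf, mulVec, dotProduct, mul_sum]
  rw [sum_comm]
  refine sum_congr rfl fun x _ => sum_congr rfl fun y _ => ?_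
  linear_combination (f y * g x) * hrev y x

lemma mulVec_div_eq_smul (hrev : ∀ x y, w x * A x y = w y * A y x) (hw : ∀ x, w x ≠ 0)
    {m : ι → ℝ} {c : ℝ} (hm : m ᵥ* A = c • m) : A *ᵥ (m / w) = c • (m / w) := by
  ext x
  have hmx : ∑ y, m y * A y x = c * m x := by simpa [vecMul, dotProduct] using congrFun hm x
  calc (A *ᵥ (m / w)) x = (∑ y, m y * A y x) / w x := by
        simp only [mulVec, dotProduct, Pi.div_apply, sum_div]
        refine sum_congr rfl fun y _ => ?_
        field_simp [hw x, hw y]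
        linear_combination m y * hrev x y
    _ = (c • (m / w)) x := by rw [hmx]; simp [mul_div_assoc]

/-- Termwise AM-GM `2 f x f y ≤ f x ^ 2 h y / h x + f y ^ 2 h x / h y` summed against
`w x A x y`; by reversibility and `A h = c h` both halves sum to `c ⟨f, f⟩_w`. -/
lemma innOf_mulVec_le (hA : ∀ x y, 0 ≤ A x y) (hw : ∀ x, 0 ≤ w x)
    (hrev : ∀ x y, w x * A x y = w y * A y x) {h : ι → ℝ} (hh : ∀ x, 0 < h x) {c : ℝ}
    (heig : A *ᵥ h = c • h) (f : ι → ℝ) : innOf w f (A *ᵥ f) ≤ c * innOf w f f := by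
  have hterm : ∀ x y, 2 * (w x * f x * (A x y * f y)) ≤
      w x * A x y * (f x ^ 2 * h y / h x) + w y * A y x * (f y ^ 2 * h x / h y) := by
    intro x y
    have hsq : 0 ≤ w x * A x y * ((f x * h y - f y * h x) ^ 2 / (h x * h y)) :=
      mul_nonneg (mul_nonneg (hw x) (hA x y))
        (div_nonneg (sq_nonneg _) (mul_pos (hh x) (hh y)).le)
    rw [← hrev x y]
    have hx := (hh x).ne'
    have hy := (hh y).ne'
    have : w x * A x y * ((f x * h y - f y * h x) ^ 2 / (h x * h y)) =
        w x * A x y * (f x ^ 2 * h y / h x) + w x * A x y * (f y ^ 2 * h x / h y)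
          - 2 * (w x * f x * (A x y * f y)) := by
      field_simp; ring
    linarith
  have hrow : ∀ x, ∑ y, w x * A x y * (f x ^ 2 * h y / h x) = c * (w x * f x * f x) := by
    intro x
    have hx : ∑ y, A x y * h y = c * h x := by simpa [mulVec, dotProduct] using congrFun heig x
    calc ∑ y, w x * A x y * (f x ^ 2 * h y / h x)
        = w x * f x ^ 2 / h x * ∑ y, A x y * h y := by
          rw [mul_sum]; exact sum_congr rfl fun y _ => by ring
      _ = c * (w x * f x * f x) := by rw [hx]; field_simp [(hh x).ne']
  calc innOf w f (A *ᵥ f) = (∑ x, ∑ y, 2 * (w x * f x * (A x y * f y))) / 2 := by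
        simp only [innOf, mulVec, dotProduct, ← mul_sum]; ring
    _ ≤ (∑ x, ∑ y, (w x * A x y * (f x ^ 2 * h y / h x)
          + w y * A y x * (f y ^ 2 * h x / h y))) / 2 := by
        gcongr with x _ y _; exact hterm x y
    _ = c * innOf w f f := by
        simp only [sum_add_distrib]
        rw [sum_comm (f := fun x y => w y * A y x * (f y ^ 2 * h x / h y))]
        simp only [hrow, innOf, mul_sum]
        ring

end Reversible

section Green

variable {ι : Type*} [Fintype ι] [DecidableEq ι] {A : Matrix ι ι ℝ} {w : ι → ℝ}

lemma vecMul_pow_eq_smul {m : ι → ℝ} {c : ℝ} (hm : m ᵥ* A = c • m) (k : ℕ) :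
    m ᵥ* A ^ k = c ^ k • m := by
  induction k with
  | zero => simp
  | succ k ih => rw [pow_succ, ← vecMul_vecMul, ih, smul_vecMul, hm, smul_smul, pow_succ]

lemma pow_apply_le (hA : ∀ x y, 0 ≤ A x y) {m : ι → ℝ} (hm : ∀ x, 0 < m x) {c : ℝ}
    (heig : m ᵥ* A = c • m) (k : ℕ) (x y : ι) : (A ^ k) x y ≤ c ^ k * (m y / m x) := by
  have hy : ∑ z, m z * (A ^ k) z y = c ^ k * m y := by
    simpa [vecMul, dotProduct] using congrFun (vecMul_pow_eq_smul heig k) y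
  rw [mul_div_assoc', le_div_iff₀ (hm x), ← hy, mul_comm]
  exact single_le_sum (f := fun z => m z * (A ^ k) z y)
    (fun z _ => mul_nonneg (hm z).le (pow_apply_nonneg hA k z y)) (mem_univ x)

lemma summable_pow_apply (hA : ∀ x y, 0 ≤ A x y) {m : ι → ℝ} (hm : ∀ x, 0 < m x) {c : ℝ}
    (heig : m ᵥ* A = c • m) (hc₀ : 0 ≤ c) (hc₁ : c < 1) (x y : ι) :
    Summable fun k => (A ^ k) x y :=
  .of_nonneg_of_le (fun k => pow_apply_nonneg hA k x y) (pow_apply_le hA hm heig · x y)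
    ((summable_geometric_of_lt_one hc₀ hc₁).mul_right _)

/-- The expected number of steps of the `A`-chain started at `x` before it is killed. -/
def greenVec (A : Matrix ι ι ℝ) (x : ι) : ℝ := ∑' k : ℕ, (A ^ k *ᵥ 1) x

variable (hs : ∀ x y, Summable fun k => (A ^ k) x y)
include hs

lemma hasSum_greenVec (x : ι) : HasSum (fun k => (A ^ k *ᵥ 1) x) (greenVec A x) := by
  refine Summable.hasSum ?_
  simpa [mulVec, dotProduct] using summable_sum fun y _ => hs x y

lemma hasSum_innOf_greenVec (u : ι → ℝ) :
    HasSum (fun k => innOf w u (A ^ k *ᵥ 1)) (innOf w u (greenVec A)) :=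
  hasSum_sum fun x _ => (hasSum_greenVec hs x).mul_left _

lemma greenVec_sub_mulVec : greenVec A - A *ᵥ greenVec A = 1 := by
  ext x
  have hshift : HasSum (fun k => (A ^ (k + 1) *ᵥ 1) x) ((A *ᵥ greenVec A) x) := by
    simp only [pow_succ', ← mulVec_mulVec]
    exact hasSum_sum fun y _ => (hasSum_greenVec hs y).mul_left (A x y)
  have h := (hasSum_nat_add_iff' 1).mpr (hasSum_greenVec hs x)
  rw [Pi.sub_apply, hshift.unique h]
  simp

lemma innOf_one_le_innOf_greenVec (hA : ∀ x y, 0 ≤ A x y) (hw : ∀ x, 0 ≤ w x) :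
    innOf w 1 1 ≤ innOf w 1 (greenVec A) := by
  refine (le_hasSum (hasSum_innOf_greenVec hs 1) 0 fun k _ => sum_nonneg fun x _ => ?_).trans_eq'
    (by simp)
  simpa [mulVec, dotProduct] using
    mul_nonneg (hw x) (sum_nonneg fun y _ => pow_apply_nonneg hA k x y)

end Green

section KilledForm

variable {ι : Type*} [Fintype ι] [DecidableEq ι] {A : Matrix ι ι ℝ} {w : ι → ℝ}

/-- `⟨f, (1 - A) g⟩_w`; for `A = p_R^*` and `w = μ` this is the Dirichlet form of `p` on
functions vanishing off `R`. -/
def killedForm (A : Matrix ι ι ℝ) (w : ι → ℝ) : LinearMap.BilinForm ℝ (ι → ℝ) :=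
  toBilin' (diagonal w * (1 - A))

lemma killedForm_apply (f g : ι → ℝ) : killedForm A w f g = innOf w f (g - A *ᵥ g) := by
  rw [killedForm, toBilin'_apply', ← mulVec_mulVec, innOf, dotProduct]
  simp only [mulVec_diagonal, sub_mulVec, one_mulVec]
  exact sum_congr rfl fun x _ => by ring

lemma killedForm_comm (hrev : ∀ x y, w x * A x y = w y * A y x) (f g : ι → ℝ) :
    killedForm A w f g = killedForm A w g f := by
  simp only [killedForm_apply, innOf_sub_right, innOf_mulVec_comm hrev f g, innOf_comm f g]

lemma mul_innOf_le_killedForm (hA : ∀ x y, 0 ≤ A x y) (hw : ∀ x, 0 ≤ w x)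
    (hrev : ∀ x y, w x * A x y = w y * A y x) {h : ι → ℝ} (hh : ∀ x, 0 < h x) {φ : ℝ}
    (heig : A *ᵥ h = (1 - φ) • h) (f : ι → ℝ) : φ * innOf w f f ≤ killedForm A w f f := by
  rw [killedForm_apply, innOf_sub_right]
  linarith [innOf_mulVec_le hA hw hrev hh heig f]

lemma killedForm_eigenvector {h : ι → ℝ} {φ : ℝ} (heig : A *ᵥ h = (1 - φ) • h) :
    killedForm A w h h = φ * innOf w h h := by
  rw [killedForm_apply, heig, innOf, innOf, mul_sum]
  exact sum_congr rfl fun x _ => by simp only [Pi.sub_apply, Pi.smul_apply, smul_eq_mul]; ring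

variable {v : ι → ℝ} (hv : v - A *ᵥ v = 1)
include hv

lemma mul_innOf_one_le_of_poisson (hw : ∀ x, 0 ≤ w x) {φ : ℝ}
    (hgap : ∀ f, φ * innOf w f f ≤ killedForm A w f f) (hT : 0 < innOf w 1 v) :
    φ * innOf w 1 v ≤ innOf w 1 1 := by
  have hvv : killedForm A w v v = innOf w 1 v := by rw [killedForm_apply, hv, innOf_comm]
  have hcs := innOf_sq_le hw 1 v
  have hZ := innOf_self_nonneg hw 1
  have hgapv := hgap v
  rw [hvv] at hgapv
  rcases le_or_gt φ 0 with hφ | hφ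
  · nlinarith
  refine le_of_mul_le_mul_right ?_ hT
  calc φ * innOf w 1 v * innOf w 1 v = φ * innOf w 1 v ^ 2 := by ring
    _ ≤ φ * (innOf w 1 1 * innOf w v v) := by gcongr
    _ = innOf w 1 1 * (φ * innOf w v v) := by ring
    _ ≤ innOf w 1 1 * innOf w 1 v := by gcongr

lemma sq_innOf_one_le_of_poisson (hrev : ∀ x y, w x * A x y = w y * A y x)
    (hpsd : ∀ f, 0 ≤ killedForm A w f f) :
    innOf w 1 1 ^ 2 ≤ killedForm A w 1 1 * innOf w 1 v := by
  have h1v : killedForm A w 1 v = innOf w 1 1 := by rw [killedForm_apply, hv]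
  have hvv : killedForm A w v v = innOf w 1 v := by rw [killedForm_apply, hv, innOf_comm]
  have hcs := (killedForm A w).apply_mul_apply_le_of_forall_zero_le hpsd 1 v
  rwa [killedForm_comm hrev v 1, h1v, hvv, ← sq] at hcs

end KilledForm

section Restriction

variable {X : Type*} [Fintype X] {p : Matrix X X ℝ} {μ : X → ℝ} {R : Finset X} {f : X → ℝ}

/-- The two halves of `(f x - f y) ^ 2 = (f x - f y) f x - (f x - f y) f y` contribute
equally by reversibility. -/
lemma dirOf_eq_innOf (hp_row : ∀ x, ∑ y, p x y = 1) (hrev : ∀ x y, μ x * p x y = μ y * p y x)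
    (f : X → ℝ) : dirOf p μ f = innOf μ f (f - p *ᵥ f) := by
  have hswap : ∑ x, ∑ y, μ x * p x y * (f x - f y) * f y
      = -∑ x, ∑ y, μ x * p x y * (f x - f y) * f x := by
    rw [sum_comm, ← sum_neg_distrib]
    refine sum_congr rfl fun x _ => ?_
    rw [← sum_neg_distrib]
    exact sum_congr rfl fun y _ => by linear_combination (f y - f x) * f x * hrev y x
  have hrow : ∀ x, ∑ y, μ x * p x y * (f x - f y) * f x = μ x * f x * (f x - (p *ᵥ f) x) := by
    intro x
    calc ∑ y, μ x * p x y * (f x - f y) * f x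
        = μ x * f x * (f x * ∑ y, p x y - ∑ y, p x y * f y) := by
          rw [mul_sum, ← sum_sub_distrib, mul_sum]
          exact sum_congr rfl fun y _ => by ring
      _ = μ x * f x * (f x - (p *ᵥ f) x) := by rw [hp_row, mul_one]; rfl
  calc dirOf p μ f = (∑ x, ∑ y, μ x * p x y * (f x - f y) * f x
        - ∑ x, ∑ y, μ x * p x y * (f x - f y) * f y) / 2 := by
        simp only [dirOf, ← sum_sub_distrib]
        ring_nf
    _ = innOf μ f (f - p *ᵥ f) := by
        rw [hswap, sub_neg_eq_add, ← two_mul, mul_div_cancel_left₀ _ two_ne_zero, innOf]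
        exact sum_congr rfl fun x _ => hrow x

lemma innOf_of_support (hf : ∀ x ∉ R, f x = 0) (g : X → ℝ) :
    innOf μ f g = innOf (fun x : R => μ x) (fun x : R => f x) (fun x : R => g x) := by
  rw [innOf, innOf, sum_coe_sort R (fun x => μ x * f x * g x)]
  exact (sum_subset (subset_univ R) fun x _ hx => by simp [hf x hx]).symm

lemma sum_mul_sq_of_support (hf : ∀ x ∉ R, f x = 0) :
    ∑ x, μ x * f x ^ 2 = innOf (fun x : R => μ x) (fun x : R => f x) (fun x : R => f x) := by
  rw [← innOf_of_support hf, innOf]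
  exact sum_congr rfl fun x _ => by ring

lemma pKill_mulVec_of_support (hf : ∀ x ∉ R, f x = 0) (x : R) :
    (pKill p R *ᵥ fun y : R => f y) x = (p *ᵥ f) x := by
  refine (sum_coe_sort R fun y => p x y * f y).trans ?_
  exact sum_subset (subset_univ R) fun y _ hy => by simp [hf y hy]

lemma dirOf_eq_killedForm [DecidableEq X] (hp_row : ∀ x, ∑ y, p x y = 1)
    (hrev : ∀ x y, μ x * p x y = μ y * p y x) (hf : ∀ x ∉ R, f x = 0) :
    dirOf p μ f = killedForm (pKill p R) (fun x : R => μ x) (fun x : R => f x)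
      (fun x : R => f x) := by
  rw [dirOf_eq_innOf hp_row hrev, innOf_of_support hf, killedForm_apply]
  congr 1
  ext x
  simp [pKill_mulVec_of_support hf]

lemma muR_eq_div_innOf (x : X) : muR μ R x = μ x / innOf (fun x : R => μ x) 1 1 := by
  simp only [muR, innOf, Pi.one_apply, mul_one]
  rw [sum_coe_sort R μ]

lemma escR_eq_one_sub [DecidableEq X] (hp_row : ∀ x, ∑ y, p x y = 1) (x : R) :
    escR p R x = 1 - (pKill p R *ᵥ 1) x := by
  have hsplit := sum_add_sum_compl R (p x)
  have hkill : (pKill p R *ᵥ 1) x = ∑ y ∈ R, p x y := by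
    simp only [mulVec, dotProduct, Pi.one_apply, mul_one]
    exact sum_coe_sort R (p x)
  rw [hp_row] at hsplit
  rw [escR, hkill]
  linarith

lemma sum_muR_mul_escR [DecidableEq X] (hp_row : ∀ x, ∑ y, p x y = 1) :
    ∑ x : R, muR μ R x * escR p R x
      = killedForm (pKill p R) (fun x : R => μ x) 1 1 / innOf (fun x : R => μ x) 1 1 := by
  rw [killedForm_apply, innOf, sum_div]
  refine sum_congr rfl fun x _ => ?_
  rw [muR_eq_div_innOf, escR_eq_one_sub hp_row]
  simp only [Pi.one_apply, Pi.sub_apply]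
  ring

lemma sum_muR_mul_pow_apply [DecidableEq X] (k : ℕ) :
    ∑ x : R, ∑ y : R, muR μ R x * (pKill p R ^ k) x y
      = innOf (fun x : R => μ x) 1 (pKill p R ^ k *ᵥ 1) / innOf (fun x : R => μ x) 1 1 := by
  rw [innOf, sum_div]
  refine sum_congr rfl fun x _ => ?_
  simp only [muR_eq_div_innOf, mulVec, dotProduct, Pi.one_apply, mul_one, mul_sum, sum_div]
  exact sum_congr rfl fun y _ => by ring

lemma isLeast_dirOf_div [DecidableEq X] (hp_row : ∀ x, ∑ y, p x y = 1)
    (hrev : ∀ x y, μ x * p x y = μ y * p y x) (hμ : ∀ x, 0 < μ x) (hR : R.Nonempty)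
    {φ : ℝ} {h : R → ℝ} (hh : ∀ x, 0 < h x) (heig : pKill p R *ᵥ h = (1 - φ) • h)
    (hgap : ∀ g, φ * innOf (fun x : R => μ x) g g ≤ killedForm (pKill p R) (fun x : R => μ x) g g) :
    IsLeast {r : ℝ | ∃ f : X → ℝ, f ≠ 0 ∧ (∀ x ∉ R, f x = 0) ∧
      r = dirOf p μ f / ∑ x, μ x * f x ^ 2} φ := by
  have hden : ∀ f : X → ℝ, f ≠ 0 → 0 < ∑ x, μ x * f x ^ 2 := by
    intro f hf
    obtain ⟨x, hx⟩ := Function.ne_iff.mp hf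
    exact sum_pos' (fun y _ => mul_nonneg (hμ y).le (sq_nonneg _))
      ⟨x, mem_univ x, mul_pos (hμ x) (pow_two_pos_of_ne_zero hx)⟩
  constructor
  · set F : X → ℝ := fun x => if hx : x ∈ R then h ⟨x, hx⟩ else 0
    have hF : ∀ x ∉ R, F x = 0 := fun x hx => dif_neg hx
    have hFR : (fun x : R => F x) = h := funext fun x => dif_pos x.2
    obtain ⟨x₀, hx₀⟩ := hR
    have hF0 : F ≠ 0 := Function.ne_iff.mpr ⟨x₀, by simp [F, hx₀, (hh _).ne']⟩
    refine ⟨F, hF0, hF, ?_⟩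
    rw [dirOf_eq_killedForm hp_row hrev hF, sum_mul_sq_of_support hF, hFR,
      killedForm_eigenvector heig, mul_div_cancel_right₀]
    rw [← hFR, ← sum_mul_sq_of_support hF]
    exact (hden F hF0).ne'
  · rintro r ⟨f, hf0, hf, rfl⟩
    rw [le_div_iff₀ (hden f hf0), dirOf_eq_killedForm hp_row hrev hf, sum_mul_sq_of_support hf]
    exact hgap _

end Restriction

theorem phi_star_variational_general
    (X : Type*) [Fintype X] [DecidableEq X]
    (p : Matrix X X ℝ) (μ : X → ℝ) (R : Finset X)
    (hp_nonneg : ∀ x y, 0 ≤ p x y)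
    (hp_row : ∀ x, ∑ y, p x y = 1)
    (hμ_pos : ∀ x, 0 < μ x)
    (hrev : ∀ x y, μ x * p x y = μ y * p y x)
    (hR_ne : R.Nonempty)
    (φstar : ℝ) (hφ_pos : 0 < φstar) (hφ_le : φstar ≤ 1)
    (μstar : R → ℝ) (hμstar_pos : ∀ x, 0 < μstar x)
    (hqs : ∀ y : R, ∑ x : R, μstar x * pKill p R x y = (1 - φstar) * μstar y)
 :
    φstar = sInf {r : ℝ | ∃ f : X → ℝ, f ≠ 0 ∧ (∀ x ∉ R, f x = 0) ∧
        r = dirOf p μ f / ∑ x, μ x * f x ^ 2} ∧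
    Summable (fun k : ℕ => ∑ x : R, ∑ y : R, muR μ R x * (pKill p R ^ k) x y) ∧
    φstar ≤ 1 / ∑' k : ℕ, ∑ x : R, ∑ y : R, muR μ R x * (pKill p R ^ k) x y ∧
    1 / (∑' k : ℕ, ∑ x : R, ∑ y : R, muR μ R x * (pKill p R ^ k) x y)
      ≤ ∑ x : R, muR μ R x * escR p R x := by
  set A := pKill p R
  set w : R → ℝ := fun x => μ x
  have hA : ∀ x y, 0 ≤ A x y := fun x y => hp_nonneg x y
  have hw : ∀ x, 0 ≤ w x := fun x => (hμ_pos x).le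
  have hrevA : ∀ x y, w x * A x y = w y * A y x := fun x y => hrev x y
  have hleft : μstar ᵥ* A = (1 - φstar) • μstar := funext hqs
  have hright := mulVec_div_eq_smul hrevA (fun x => (hμ_pos x).ne') hleft
  have hh : ∀ x, 0 < (μstar / w) x := fun x => div_pos (hμstar_pos x) (hμ_pos x)
  have hgap := mul_innOf_le_killedForm hA hw hrevA hh hright
  have hs := summable_pow_apply hA hμstar_pos hleft (by linarith) (by linarith)
  have hv := greenVec_sub_mulVec hs
  have hT := hasSum_innOf_greenVec (w := w) hs 1
  have hS : HasSum (fun k => ∑ x : R, ∑ y : R, muR μ R x * (A ^ k) x y)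
      (innOf w 1 (greenVec A) / innOf w 1 1) := by
    rw [funext sum_muR_mul_pow_apply]
    exact hT.div_const _
  have hZ : 0 < innOf w 1 1 :=
    have : Nonempty R := hR_ne.to_subtype
    sum_pos (fun x _ => by simpa using hμ_pos x) univ_nonempty
  have hZT := innOf_one_le_innOf_greenVec hs hA hw
  refine ⟨(isLeast_dirOf_div hp_row hrev hμ_pos hR_ne hh hright hgap).csInf_eq.symm,
    hS.summable, ?_, ?_⟩
  · rw [hS.tsum_eq, one_div_div, le_div_iff₀ (by linarith)]
    exact mul_innOf_one_le_of_poisson hv hw hgap (by linarith)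
  · rw [hS.tsum_eq, one_div_div, sum_muR_mul_escR hp_row, div_le_div_iff₀ (by linarith) hZ]
    simpa only [sq] using sq_innOf_one_le_of_poisson hv hrevA
      fun f => (mul_nonneg hφ_pos.le (innOf_self_nonneg hw f)).trans (hgap f)

/-- Lemma 2.2: variational characterization of `φ_R^*` and the bounds
`φ_R^* ≤ 1/E_{μ_R}[τ_{X∖R}] ≤ φ_R`. -/
theorem phi_star_variational
    (X : Type*) [Fintype X] [DecidableEq X]
    (p : Matrix X X ℝ) (μ : X → ℝ) (R : Finset X)
    (hp_nonneg : ∀ x y, 0 ≤ p x y)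
    (hp_row : ∀ x, ∑ y, p x y = 1)
    (hp_irr : Irred p)
    (hμ_pos : ∀ x, 0 < μ x)
    (hμ_sum : ∑ x, μ x = 1)
    (hrev : ∀ x y, μ x * p x y = μ y * p y x)
    (hR_ne : R.Nonempty) (hR_proper : R ≠ Finset.univ)
    (φstar : ℝ) (hφ_pos : 0 < φstar) (hφ_le : φstar ≤ 1)
    (μstar : R → ℝ) (hμstar_pos : ∀ x, 0 < μstar x)
    (hμstar_sum : ∑ x : R, μstar x = 1)
    (hqs : ∀ y : R, ∑ x : R, μstar x * pKill p R x y = (1 - φstar) * μstar y)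
 :
    φstar = sInf {r : ℝ | ∃ f : X → ℝ, f ≠ 0 ∧ (∀ x ∉ R, f x = 0) ∧
        r = dirOf p μ f / ∑ x, μ x * f x ^ 2} ∧
    Summable (fun k : ℕ => ∑ x : R, ∑ y : R, muR μ R x * (pKill p R ^ k) x y) ∧
    φstar ≤ 1 / ∑' k : ℕ, ∑ x : R, ∑ y : R, muR μ R x * (pKill p R ^ k) x y ∧
    1 / (∑' k : ℕ, ∑ x : R, ∑ y : R, muR μ R x * (pKill p R ^ k) x y)
      ≤ ∑ x : R, muR μ R x * escR p R x :=
  phi_star_variational_general X p μ R hp_nonneg hp_row hμ_pos hrev hR_ne φstar hφ_pos hφ_le μstar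
    hμstar_pos hqs
end
end

section
/- Let κ > 0 and let V : X → ℝ satisfy V ≡ 0 on X∖R and Σ_{y∈X} p(x,y)·(V(y) − V(x)) = κ·(V(x) − 1) for every x ∈ R (V is the equilibrium potential V(x) = P_x(σ_κ < τ_{X∖R}), with σ_κ an exponential time of rate κ independent of the chain). Then Σ_{x∈R} μ_R(x)·V(x) = 1 − C_κ(R, X∖R)/(κ·μ(R)). -/
/-!
The equilibrium potential `V` minimises the Dirichlet principle defining `C_κ(R, X∖R)`.
By reversibility (Green's formula) the cross term `D(V, g)` against a perturbation `g`
vanishing off `R` equals `-κ Σ_R μ g (V - 1)`, which cancels the cross term of the penalty, so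
`E(V + g) = E(V) + D(g) + κ Σ_R μ g² ≥ E(V)`. Testing the equation with `g = V` gives
`E(V) = κ Σ_R μ (1 - V) = κ μ(R) (1 - Σ_R μ_R V)`.
-/

open Finset

noncomputable section

section DirichletForm

variable {n : Type*} [Fintype n] (P : Matrix n n ℝ) (μ : n → ℝ)

def dirPair (f g : n → ℝ) : ℝ :=
  (1 / 2) * ∑ x, ∑ y, μ x * P x y * (f x - f y) * (g x - g y)

theorem dirPair_self (f : n → ℝ) : dirPair P μ f f = dirOf P μ f := by
  simp only [dirPair, dirOf, mul_assoc, ← sq]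

theorem dirOf_add (f g : n → ℝ) :
    dirOf P μ (f + g) = dirOf P μ f + 2 * dirPair P μ f g + dirOf P μ g := by
  simp only [dirOf, dirPair, Pi.add_apply, mul_sum, ← sum_add_distrib]
  exact sum_congr rfl fun x _ => sum_congr rfl fun y _ => by ring

theorem dirOf_nonneg_s14 {P μ} (hP : ∀ x y, 0 ≤ P x y) (hμ : ∀ x, 0 ≤ μ x) (f : n → ℝ) :
    0 ≤ dirOf P μ f :=
  mul_nonneg (by norm_num) <| sum_nonneg fun x _ => sum_nonneg fun y _ =>
    mul_nonneg (mul_nonneg (hμ x) (hP x y)) (sq_nonneg _)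

theorem dirPair_eq_neg_sum_mul_generator {P μ} (hrev : ∀ x y, μ x * P x y = μ y * P y x)
    (f g : n → ℝ) :
    dirPair P μ f g = -∑ x, μ x * g x * ∑ y, P x y * (f y - f x) := by
  have hswap : ∑ x, ∑ y, μ x * P x y * (f x - f y) * g y
      = ∑ x, ∑ y, μ x * P x y * (f y - f x) * g x := by
    rw [sum_comm]
    exact sum_congr rfl fun y _ => sum_congr rfl fun x _ => by rw [hrev x y]
  have hsplit : ∑ x, ∑ y, μ x * P x y * (f x - f y) * (g x - g y)
      = ∑ x, ∑ y, μ x * P x y * (f x - f y) * g x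
        - ∑ x, ∑ y, μ x * P x y * (f x - f y) * g y := by
    rw [← sum_sub_distrib]
    refine sum_congr rfl fun x _ => ?_
    rw [← sum_sub_distrib]
    exact sum_congr rfl fun y _ => by ring
  rw [dirPair, hsplit, hswap, ← sum_sub_distrib, mul_sum, ← sum_neg_distrib]
  refine sum_congr rfl fun x _ => ?_
  rw [← sum_sub_distrib, mul_sum, mul_sum, ← sum_neg_distrib]
  exact sum_congr rfl fun y _ => by ring

end DirichletForm

section EquilibriumPotential

variable {X : Type*} [Fintype X] {p : Matrix X X ℝ} {μ : X → ℝ} {R : Finset X} {κ : ℝ}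
  {V : X → ℝ}

def energyK (p : Matrix X X ℝ) (μ : X → ℝ) (R : Finset X) (κ : ℝ) (f : X → ℝ) : ℝ :=
  dirOf p μ f + κ * ∑ a ∈ R, μ a * (f a - 1) ^ 2

theorem dirPair_equilibriumPotential (hrev : ∀ x y, μ x * p x y = μ y * p y x)
    (hVharm : ∀ x ∈ R, ∑ y, p x y * (V y - V x) = κ * (V x - 1))
    {g : X → ℝ} (hg : ∀ x ∉ R, g x = 0) :
    dirPair p μ V g = -(κ * ∑ a ∈ R, μ a * g a * (V a - 1)) := by
  rw [dirPair_eq_neg_sum_mul_generator hrev,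
    ← sum_subset (subset_univ R) fun x _ hx => by simp [hg x hx], mul_sum]
  exact congrArg _ (sum_congr rfl fun x hx => by rw [hVharm x hx]; ring)

theorem energyK_add_equilibriumPotential (hrev : ∀ x y, μ x * p x y = μ y * p y x)
    (hVharm : ∀ x ∈ R, ∑ y, p x y * (V y - V x) = κ * (V x - 1))
    {g : X → ℝ} (hg : ∀ x ∉ R, g x = 0) :
    energyK p μ R κ (V + g)
      = energyK p μ R κ V + (dirOf p μ g + κ * ∑ a ∈ R, μ a * g a ^ 2) := by
  have hpenalty : ∑ a ∈ R, μ a * ((V + g) a - 1) ^ 2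
      = ∑ a ∈ R, μ a * (V a - 1) ^ 2 + 2 * ∑ a ∈ R, μ a * g a * (V a - 1)
        + ∑ a ∈ R, μ a * g a ^ 2 := by
    rw [mul_sum, ← sum_add_distrib, ← sum_add_distrib]
    exact sum_congr rfl fun a _ => by simp only [Pi.add_apply]; ring
  rw [energyK, energyK, dirOf_add, dirPair_equilibriumPotential hrev hVharm hg, hpenalty]
  ring

theorem isLeast_energyK_equilibriumPotential (hp : ∀ x y, 0 ≤ p x y) (hμ : ∀ x, 0 ≤ μ x)
    (hrev : ∀ x y, μ x * p x y = μ y * p y x) (hκ : 0 ≤ κ) (hV0 : ∀ x ∉ R, V x = 0)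
    (hVharm : ∀ x ∈ R, ∑ y, p x y * (V y - V x) = κ * (V x - 1)) :
    IsLeast (energyK p μ R κ '' {f | ∀ x ∉ R, f x = 0}) (energyK p μ R κ V) := by
  refine ⟨⟨V, hV0, rfl⟩, ?_⟩
  rintro _ ⟨f, hf, rfl⟩
  have hg : ∀ x ∉ R, (f - V) x = 0 := fun x hx => by simp [hf x hx, hV0 x hx]
  rw [← add_sub_cancel V f, energyK_add_equilibriumPotential hrev hVharm hg]
  have hpenalty : 0 ≤ κ * ∑ a ∈ R, μ a * (f - V) a ^ 2 :=
    mul_nonneg hκ (sum_nonneg fun a _ => mul_nonneg (hμ a) (sq_nonneg _))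
  linarith [dirOf_nonneg_s14 hp hμ (f - V)]

theorem energyK_equilibriumPotential (hrev : ∀ x y, μ x * p x y = μ y * p y x)
    (hV0 : ∀ x ∉ R, V x = 0) (hVharm : ∀ x ∈ R, ∑ y, p x y * (V y - V x) = κ * (V x - 1)) :
    energyK p μ R κ V = κ * ∑ a ∈ R, μ a * (1 - V a) := by
  rw [energyK, ← dirPair_self, dirPair_equilibriumPotential hrev hVharm hV0, ← mul_neg,
    ← mul_add, ← sum_neg_distrib, ← sum_add_distrib]
  exact congrArg _ (sum_congr rfl fun a _ => by ring)

theorem capK_eq_energyK_equilibriumPotential [DecidableEq X] (hp : ∀ x y, 0 ≤ p x y)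
    (hμ : ∀ x, 0 ≤ μ x) (hrev : ∀ x y, μ x * p x y = μ y * p y x) (hκ : 0 ≤ κ)
    (hV0 : ∀ x ∉ R, V x = 0) (hVharm : ∀ x ∈ R, ∑ y, p x y * (V y - V x) = κ * (V x - 1)) :
    capK p μ R κ = energyK p μ R κ V := by
  rw [← (isLeast_energyK_equilibriumPotential hp hμ hrev hκ hV0 hVharm).csInf_eq, capK]
  congr 1
  ext r
  simp only [Set.mem_ofPred_eq, Set.mem_image, energyK, eq_comm]

end EquilibriumPotential

theorem sum_muR_mul {X : Type*} [Fintype X] (μ : X → ℝ) (R : Finset X) (f : X → ℝ) :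
    ∑ x : R, muR μ R x * f x = (∑ a ∈ R, μ a * f a) / ∑ y ∈ R, μ y := by
  rw [sum_coe_sort R fun x => muR μ R x * f x, sum_div]
  exact sum_congr rfl fun a _ => by rw [muR]; ring

theorem mean_equilibrium_potential_general
    (X : Type*) [Fintype X] [DecidableEq X]
    (p : Matrix X X ℝ) (μ : X → ℝ) (R : Finset X)
    (hp_nonneg : ∀ x y, 0 ≤ p x y)
    (hμ_pos : ∀ x, 0 < μ x)
    (hrev : ∀ x y, μ x * p x y = μ y * p y x)
    (hR_ne : R.Nonempty)
    (κ : ℝ) (hκ : 0 < κ)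
    (V : X → ℝ) (hV0 : ∀ x ∉ R, V x = 0)
    (hVharm : ∀ x ∈ R, ∑ y, p x y * (V y - V x) = κ * (V x - 1)) :
    ∑ x : R, muR μ R x * V x = 1 - capK p μ R κ / (κ * ∑ y ∈ R, μ y) := by
  have hμR : 0 < ∑ y ∈ R, μ y := sum_pos (fun x _ => hμ_pos x) hR_ne
  have hcap : capK p μ R κ = κ * (∑ y ∈ R, μ y - ∑ a ∈ R, μ a * V a) := by
    rw [capK_eq_energyK_equilibriumPotential hp_nonneg (fun x => (hμ_pos x).le) hrev hκ.le hV0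
      hVharm, energyK_equilibriumPotential hrev hV0 hVharm, ← sum_sub_distrib]
    exact congrArg _ (sum_congr rfl fun a _ => by ring)
  rw [sum_muR_mul, hcap]
  field_simp
  ring

/-- Lemma 5.1: the mean of the equilibrium potential `V_κ` under the restricted ensemble is
`1 − C_κ(R, X∖R)/(κ·μ(R))`. -/
theorem mean_equilibrium_potential
    (X : Type*) [Fintype X] [DecidableEq X]
    (p : Matrix X X ℝ) (μ : X → ℝ) (R : Finset X)
    (hp_nonneg : ∀ x y, 0 ≤ p x y)
    (hp_row : ∀ x, ∑ y, p x y = 1)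
    (hp_irr : Irred p)
    (hμ_pos : ∀ x, 0 < μ x)
    (hμ_sum : ∑ x, μ x = 1)
    (hrev : ∀ x y, μ x * p x y = μ y * p y x)
    (hR_ne : R.Nonempty) (hR_proper : R ≠ Finset.univ)
    (κ : ℝ) (hκ : 0 < κ)
    (V : X → ℝ) (hV0 : ∀ x ∉ R, V x = 0)
    (hVharm : ∀ x ∈ R, ∑ y, p x y * (V y - V x) = κ * (V x - 1)) :
    ∑ x : R, muR μ R x * V x = 1 - capK p μ R κ / (κ * ∑ y ∈ R, μ y) :=
  mean_equilibrium_potential_general X p μ R hp_nonneg hμ_pos hrev hR_ne κ hκ V hV0 hVharm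
end
end
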